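/- Let f(x) = Σ_{k=0}^d a_k·x^k be a polynomial with a_k ≥ 0 for all k, and let s = (s_α)_{α∈ℕ₀^n} be a moment sequence represented by a finite measure μ with all moments finite. Then the sequence (f(s_α))_{α∈ℕ₀^n} is a moment sequence, represented by Σ_{k=0}^d a_k·μ^{⊙k}. -/

import Mathlib

open MeasureTheory

/-- Multiplicative convolution of measures on ℝ^n. -/
noncomputable def mconv {n : ℕ} (μ ν : Measure (Fin n → ℝ)) : Measure (Fin n → ℝ) :=
  (μ.prod ν).map (fun p => fun i => p.1 i * p.2 i)

/-- `k`-fold multiplicative convolution power, with `ν^{⊙0} = δ_𝟙`. -/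
noncomputable def mconvPow {n : ℕ} (ν : Measure (Fin n → ℝ)) : ℕ → Measure (Fin n → ℝ)
  | 0 => Measure.dirac (fun _ => (1 : ℝ))
  | k + 1 => mconv ν (mconvPow ν k)

/-! The integral of a measurable character `φ : (ℝ^n, ·) →* (ℝ, ·)` against `μ ⊙ ν` is the
product of its integrals (Fubini), so the moments of `μ^{⊙k}` are the `k`-th powers of those of
`μ`; the monomials `x ↦ x^α` are such characters, and the integral is linear in the measure. -/

def monomialHom {ι R : Type*} [Fintype ι] [CommMonoid R] (α : ι → ℕ) : (ι → R) →* R where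
  toFun x := ∏ i, x i ^ α i
  map_one' := by simp
  map_mul' x y := by simp only [Pi.mul_apply, mul_pow, Finset.prod_mul_distrib]

lemma measurable_monomialHom {ι : Type*} [Fintype ι] (α : ι → ℕ) :
    Measurable (monomialHom (R := ℝ) α) :=
  Finset.measurable_prod _ fun i _ => (measurable_pi_apply i).pow_const _

section mconv

variable {n : ℕ} (μ ν : Measure (Fin n → ℝ))

instance sFinite_mconv [SFinite μ] [SFinite ν] : SFinite (mconv μ ν) := by
  unfold mconv; infer_instance

instance sFinite_mconvPow [SFinite μ] (k : ℕ) : SFinite (mconvPow μ k) := by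
  induction k with
  | zero => unfold mconvPow; infer_instance
  | succ k ih => unfold mconvPow; infer_instance

lemma mconv_eq_map_mul : mconv μ ν = (μ.prod ν).map (fun p => p.1 * p.2) := rfl

variable {μ ν} {φ : (Fin n → ℝ) →* ℝ}

lemma integrable_mconv [SFinite μ] [SFinite ν] (hφ : Measurable φ) (hμ : Integrable φ μ)
    (hν : Integrable φ ν) : Integrable φ (mconv μ ν) := by
  rw [mconv_eq_map_mul, integrable_map_measure hφ.aestronglyMeasurable measurable_mul.aemeasurable]
  simpa only [Function.comp_def, map_mul] using hμ.mul_prod hν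

lemma integral_mconv [SFinite μ] [SFinite ν] (hφ : Measurable φ) :
    ∫ x, φ x ∂(mconv μ ν) = (∫ x, φ x ∂μ) * ∫ x, φ x ∂ν := by
  rw [mconv_eq_map_mul, integral_map measurable_mul.aemeasurable hφ.aestronglyMeasurable]
  simpa only [map_mul] using integral_prod_mul φ φ

lemma integrable_mconvPow [SFinite μ] (hφ : Measurable φ) (hμ : Integrable φ μ) (k : ℕ) :
    Integrable φ (mconvPow μ k) := by
  induction k with
  | zero => exact integrable_dirac enorm_lt_top
  | succ k ih => exact integrable_mconv hφ hμ ih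

lemma integral_mconvPow [SFinite μ] (hφ : Measurable φ) (k : ℕ) :
    ∫ x, φ x ∂(mconvPow μ k) = (∫ x, φ x ∂μ) ^ k := by
  induction k with
  | zero => simp [mconvPow, ← Pi.one_def]
  | succ k ih => rw [mconvPow, integral_mconv hφ, ih, pow_succ']

end mconv

theorem polynomial_map_moment_sequence {n : ℕ} (d : ℕ) (a : ℕ → ℝ)
    (ha : ∀ k, 0 ≤ a k) (μ : Measure (Fin n → ℝ)) [IsFiniteMeasure μ]
    (s : (Fin n → ℕ) → ℝ)
    (hint : ∀ α : Fin n → ℕ, Integrable (fun x => ∏ i, x i ^ α i) μ)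
    (hs : ∀ α : Fin n → ℕ, s α = ∫ x, ∏ i, x i ^ α i ∂μ) :
    ∀ α : Fin n → ℕ,
      ∫ x, ∏ i, x i ^ α i
          ∂(∑ k ∈ Finset.range (d + 1), ENNReal.ofReal (a k) • mconvPow μ k) =
        ∑ k ∈ Finset.range (d + 1), a k * (s α) ^ k := by
  intro α
  have hφ := measurable_monomialHom α
  have hint_pow (k : ℕ) : Integrable (fun x => ∏ i, x i ^ α i) (mconvPow μ k) :=
    integrable_mconvPow (φ := monomialHom α) hφ (hint α) k
  have hmoment_pow (k : ℕ) : ∫ x, ∏ i, x i ^ α i ∂(mconvPow μ k) = s α ^ k := by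
    rw [hs α]; exact integral_mconvPow (φ := monomialHom α) hφ k
  rw [integral_finsetSum_measure fun k _ => (hint_pow k).smul_measure ENNReal.ofReal_ne_top]
  refine Finset.sum_congr rfl fun k _ => ?_
  rw [integral_smul_measure, ENNReal.toReal_ofReal (ha k), hmoment_pow, smul_eq_mul]
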